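/- arXiv:1909.01321 — 5 statements merged into one kernel-verified Lean document; each statement's English description precedes it below -/
import Mathlib

section
/- Let β > 0 and let i, m be integers with 1 ≤ i < m. If z is the m-th positive zero of the Bessel function 𝒥_β and z' is the i-th positive zero of the Bessel function 𝒥_{β+2(m−i)}, then z' < z. -/
/-!
Write `𝒥_γ(t) = (t/2)^γ F_γ((t/2)²)` with the entire function
`F_γ(x) = Σ (-1)^k x^k / (k! Γ(k+1+γ))`. Then `F_γ' = -F_{γ+1}` and
`F_γ + x F_{γ+2} = (γ+1) F_{γ+1}`. If `F_γ` has `m` zeros in `(0, Z]`, the largest being `Z`,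
Rolle's theorem applied twice gives `m - 2` zeros of `F_{γ+2}` below the largest zero `c` of
`F_{γ+1}` in `(0, Z)`, and the recurrence together with the mean value theorem on `[c, Z]` forces
a sign change of `F_{γ+2}` in `(c, Z)`. So each step `γ ↦ γ + 2` loses at most one zero below `Z`,
and after `m - i` steps `𝒥_{β+2(m-i)}` still has `i` zeros in `(0, z)`.

`F_γ` and `F_{γ+1}` have no common zero: by the recurrence it would be a common zero of every
`F_{γ+n}`, while `F_{γ+n} > 0` for `2|x| < 1 + γ + n`. Hence the zeros of `F_γ` are simple, so
isolated, and there are finitely many in any bounded set.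
-/

/-- The Bessel function of the first kind of order `β`,
`𝒥_β(r) = Σ_{k=0}^∞ (−1)^k/(k!·Γ(k+1+β)) · (r/2)^{2k+β}`. -/
noncomputable def besselJ (β r : ℝ) : ℝ :=
  ∑' k : ℕ, ((-1 : ℝ) ^ k / (Nat.factorial k * Real.Gamma ((k : ℝ) + 1 + β))) *
    (r / 2) ^ (2 * (k : ℝ) + β)

/-- `z` is the `m`-th positive zero of `𝒥_β`: it is a positive zero of `𝒥_β` and
there are exactly `m − 1` zeros of `𝒥_β` in `(0, z)`. -/
def IsNthPosZero (β : ℝ) (m : ℕ) (z : ℝ) : Prop :=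
  0 < z ∧ besselJ β z = 0 ∧
    Set.ncard {t : ℝ | t ∈ Set.Ioo 0 z ∧ besselJ β t = 0} = m - 1

open Real Set Filter Topology
open scoped Nat

noncomputable section

def besselFCoeff (γ : ℝ) (k : ℕ) : ℝ := (-1) ^ k / (k ! * Gamma (k + 1 + γ))

def besselF (γ x : ℝ) : ℝ := ∑' k, besselFCoeff γ k * x ^ k

variable {γ : ℝ}

lemma Gamma_natCast_add_one_add_pos (hγ : -1 < γ) (k : ℕ) : 0 < Gamma (k + 1 + γ) :=
  Gamma_pos_of_pos (by linarith [k.cast_nonneg (α := ℝ)])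

lemma Gamma_one_add_mul_pow_le (hγ : -1 < γ) (k : ℕ) :
    Gamma (1 + γ) * (1 + γ) ^ k ≤ Gamma (k + 1 + γ) := by
  induction k with
  | zero => simp
  | succ k ih =>
    have hk : (1 + γ) ≤ k + 1 + γ := by linarith [k.cast_nonneg (α := ℝ)]
    calc Gamma (1 + γ) * (1 + γ) ^ (k + 1) = Gamma (1 + γ) * (1 + γ) ^ k * (1 + γ) := by ring
      _ ≤ Gamma (k + 1 + γ) * (k + 1 + γ) :=
        mul_le_mul ih hk (by linarith) (Gamma_natCast_add_one_add_pos hγ k).le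
      _ = Gamma ((k + 1 : ℕ) + 1 + γ) := by
        rw [show ((k + 1 : ℕ) : ℝ) + 1 + γ = (k + 1 + γ) + 1 by push_cast; ring,
          Gamma_add_one (by linarith), mul_comm]

lemma abs_besselFCoeff_mul_pow_le (hγ : -1 < γ) (k : ℕ) (x : ℝ) :
    |besselFCoeff γ k * x ^ k| ≤ (Gamma (1 + γ))⁻¹ * (|x| / (1 + γ)) ^ k / k ! := by
  have hΓ : 0 < Gamma (1 + γ) := Gamma_pos_of_pos (by linarith)
  have hk : (0 : ℝ) < k ! := by positivity
  rw [besselFCoeff, abs_mul, abs_div, abs_pow, abs_neg, abs_one, one_pow, abs_pow,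
    abs_of_pos (mul_pos hk (Gamma_natCast_add_one_add_pos hγ k)), div_pow]
  calc 1 / (k ! * Gamma (k + 1 + γ)) * |x| ^ k
      ≤ 1 / (k ! * (Gamma (1 + γ) * (1 + γ) ^ k)) * |x| ^ k := by
        gcongr
        · exact mul_pos hk (mul_pos hΓ (pow_pos (by linarith) k))
        · exact Gamma_one_add_mul_pow_le hγ k
    _ = (Gamma (1 + γ))⁻¹ * (|x| ^ k / (1 + γ) ^ k) / k ! := by
        field_simp

lemma summable_abs_besselFCoeff_mul_pow (hγ : -1 < γ) (x : ℝ) :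
    Summable fun k ↦ |besselFCoeff γ k * x ^ k| :=
  .of_nonneg_of_le (fun _ ↦ abs_nonneg _) (abs_besselFCoeff_mul_pow_le hγ · x) <| by
    simpa only [mul_div_assoc] using (Real.summable_pow_div_factorial _).mul_left _

lemma summable_besselFCoeff_mul_pow (hγ : -1 < γ) (x : ℝ) :
    Summable fun k ↦ besselFCoeff γ k * x ^ k :=
  .of_abs (summable_abs_besselFCoeff_mul_pow hγ x)

lemma besselF_zero (γ : ℝ) : besselF γ 0 = (Gamma (1 + γ))⁻¹ := by
  rw [besselF, tsum_eq_single 0 fun k hk ↦ by simp [zero_pow hk]]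
  simp [besselFCoeff]

lemma besselF_zero_pos (hγ : -1 < γ) : 0 < besselF γ 0 := by
  rw [besselF_zero]
  exact inv_pos.2 (Gamma_pos_of_pos (by linarith))

lemma besselF_pos_of_two_mul_abs_lt (hγ : -1 < γ) {x : ℝ} (hx : 2 * |x| < 1 + γ) :
    0 < besselF γ x := by
  set C := (Gamma (1 + γ))⁻¹
  set q := |x| / (1 + γ)
  have hC : 0 < C := inv_pos.2 (Gamma_pos_of_pos (by linarith))
  have hq : 0 ≤ q := div_nonneg (abs_nonneg x) (by linarith)
  have hq2 : q < 1 / 2 := by rw [div_lt_iff₀ (by linarith)]; linarith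
  -- termwise, `besselF γ x ≥ C - C q - C q² - ⋯ = C (1 - 2q) / (1 - q)`
  have hsum : HasSum (fun k : ℕ ↦ (if k = 0 then 2 * C else 0) - C * q ^ k)
      (2 * C - C * (1 - q)⁻¹) :=
    (hasSum_ite_eq 0 (2 * C)).sub ((hasSum_geometric_of_lt_one hq (by linarith)).mul_left C)
  have hterm (k : ℕ) : (if k = 0 then 2 * C else 0) - C * q ^ k ≤ besselFCoeff γ k * x ^ k := by
    rcases k with _ | k
    · simp [besselFCoeff, C, two_mul]
    · have hk : (1 : ℝ) ≤ (k + 1) ! := by exact_mod_cast (k + 1).factorial_pos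
      have := abs_besselFCoeff_mul_pow_le hγ (k + 1) x
      have := div_le_self (by positivity : 0 ≤ C * q ^ (k + 1)) hk
      simp only [Nat.add_one_ne_zero, if_false, zero_sub]
      linarith [neg_abs_le (besselFCoeff γ (k + 1) * x ^ (k + 1))]
  have hlt : (1 - q)⁻¹ < 2 := by
    rw [inv_lt_comm₀ (by linarith) two_pos]; linarith
  calc 0 < 2 * C - C * (1 - q)⁻¹ := by nlinarith
    _ ≤ besselF γ x :=
      hasSum_le hterm hsum (summable_besselFCoeff_mul_pow hγ x).hasSum

lemma natCast_add_one_mul_besselFCoeff_succ (γ : ℝ) (k : ℕ) :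
    (k + 1) * besselFCoeff γ (k + 1) = -besselFCoeff (γ + 1) k := by
  have hk : (k + 1 : ℝ) ≠ 0 := by positivity
  rw [besselFCoeff, besselFCoeff, Nat.factorial_succ, pow_succ,
    show ((k + 1 : ℕ) : ℝ) + 1 + γ = k + 1 + (γ + 1) by push_cast; ring]
  push_cast
  field_simp

lemma hasDerivAt_besselF (hγ : -1 < γ) (x : ℝ) :
    HasDerivAt (besselF γ) (-besselF (γ + 1) x) x := by
  set R := |x| + 1
  have hR : 0 < R := by positivity
  have hxR : x ∈ Ioo (-R) R := abs_lt.1 (lt_add_one _)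
  -- termwise differentiation gives the shifted series of `-besselF (γ + 1)`, which also bounds it
  have hshift (k : ℕ) (y : ℝ) : besselFCoeff γ (k + 1) * ((k + 1 : ℕ) * y ^ k) =
      -(besselFCoeff (γ + 1) k * y ^ k) := by
    rw [← neg_mul, ← natCast_add_one_mul_besselFCoeff_succ]; push_cast; ring
  set u : ℕ → ℝ := fun k ↦ |besselFCoeff γ k * (k * R ^ (k - 1))|
  have hu : Summable u := by
    rw [← summable_nat_add_iff 1]
    simpa only [u, Nat.add_sub_cancel, hshift, abs_neg] using
      summable_abs_besselFCoeff_mul_pow (by linarith) R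
  have hbound (k : ℕ) (y : ℝ) (hy : y ∈ Ioo (-R) R) :
      ‖besselFCoeff γ k * (k * y ^ (k - 1))‖ ≤ u k := by
    have : |y| ≤ R := abs_le.2 ⟨hy.1.le, hy.2.le⟩
    simp only [u, Real.norm_eq_abs, abs_mul, abs_pow, Nat.abs_cast, abs_of_pos hR]
    gcongr
  have hderiv := hasDerivAt_tsum_of_isPreconnected hu isOpen_Ioo isPreconnected_Ioo
    (fun k y _ ↦ (hasDerivAt_pow k y).const_mul (besselFCoeff γ k)) hbound
    ⟨neg_lt_zero.2 hR, hR⟩ (summable_besselFCoeff_mul_pow hγ 0) hxR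
  have hsum : Summable fun k ↦ besselFCoeff γ k * (k * x ^ (k - 1)) :=
    .of_norm_bounded hu (hbound · x hxR)
  rw [hsum.tsum_eq_zero_add] at hderiv
  simp only [Nat.cast_zero, zero_mul, mul_zero, zero_add, Nat.add_sub_cancel, hshift,
    tsum_neg] at hderiv
  exact hderiv

lemma continuous_besselF (hγ : -1 < γ) : Continuous (besselF γ) :=
  continuous_iff_continuousAt.2 fun x ↦ (hasDerivAt_besselF hγ x).continuousAt

lemma add_one_mul_besselFCoeff_succ_sub (hγ : -1 < γ) (k : ℕ) :
    (γ + 1) * besselFCoeff (γ + 1) (k + 1) - besselFCoeff γ (k + 1) = besselFCoeff (γ + 2) k := by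
  have hk : (k + 2 + γ : ℝ) ≠ 0 := by linarith [k.cast_nonneg (α := ℝ)]
  have hΓ : Gamma (k + 2 + γ) ≠ 0 := (Gamma_pos_of_pos (by linarith [k.cast_nonneg (α := ℝ)])).ne'
  rw [besselFCoeff, besselFCoeff, besselFCoeff,
    show ((k + 1 : ℕ) : ℝ) + 1 + (γ + 1) = k + 2 + γ + 1 by push_cast; ring,
    show ((k + 1 : ℕ) : ℝ) + 1 + γ = k + 2 + γ by push_cast; ring,
    show (k : ℝ) + 1 + (γ + 2) = k + 2 + γ + 1 by ring, Gamma_add_one hk, Nat.factorial_succ,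
    pow_succ]
  push_cast
  field_simp
  ring

lemma besselF_add_mul_besselF_add_two (hγ : -1 < γ) (x : ℝ) :
    besselF γ x + x * besselF (γ + 2) x = (γ + 1) * besselF (γ + 1) x := by
  have hγ1 : -1 < γ + 1 := by linarith
  have h0 : (γ + 1) * besselFCoeff (γ + 1) 0 - besselFCoeff γ 0 = 0 := by
    rw [besselFCoeff, besselFCoeff, show ((0 : ℕ) : ℝ) + 1 + (γ + 1) = 1 + γ + 1 by simp; ring,
      Gamma_add_one (by linarith)]
    have : Gamma (1 + γ) ≠ 0 := (Gamma_pos_of_pos (by linarith)).ne'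
    have : 1 + γ ≠ 0 := by linarith
    simp only [pow_zero, Nat.factorial_zero, Nat.cast_one, one_mul, CharP.cast_eq_zero, zero_add]
    field_simp
    ring
  have hA := (summable_besselFCoeff_mul_pow hγ1 x).mul_left (γ + 1)
  have hB := summable_besselFCoeff_mul_pow hγ x
  suffices (γ + 1) * besselF (γ + 1) x - besselF γ x = x * besselF (γ + 2) x by linarith
  rw [besselF, besselF, besselF, ← tsum_mul_left, ← tsum_mul_left, ← hA.tsum_sub hB,
    (hA.sub hB).tsum_eq_zero_add]
  simp only [← mul_assoc, ← sub_mul, h0, add_one_mul_besselFCoeff_succ_sub hγ, pow_succ]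
  rw [zero_mul, zero_add]
  exact tsum_congr fun _ ↦ by ring

lemma besselF_add_one_ne_zero (hγ : -1 < γ) {x : ℝ} (hx : besselF γ x = 0) :
    besselF (γ + 1) x ≠ 0 := by
  intro hx1
  rcases eq_or_ne x 0 with rfl | hx0
  · exact (besselF_zero_pos hγ).ne' hx
  have hγn (n : ℕ) : -1 < γ + n := by linarith [n.cast_nonneg (α := ℝ)]
  have hzero (n : ℕ) : besselF (γ + n) x = 0 ∧ besselF (γ + n + 1) x = 0 := by
    induction n with
    | zero => simpa using ⟨hx, hx1⟩
    | succ n ih =>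
      have h := besselF_add_mul_besselF_add_two (hγn n) x
      rw [ih.1, ih.2, mul_zero, zero_add, mul_eq_zero] at h
      refine ⟨by simpa [add_assoc] using ih.2, ?_⟩
      convert h.resolve_left hx0 using 2
      push_cast
      ring
  obtain ⟨n, hn⟩ := exists_nat_gt (2 * |x| - 1 - γ)
  exact (besselF_pos_of_two_mul_abs_lt (hγn n) (by linarith)).ne' (hzero n).1

lemma finite_inter_besselF_preimage_zero (hγ : -1 < γ) {s : Set ℝ}
    (hs : Bornology.IsBounded s) : (s ∩ besselF γ ⁻¹' {0}).Finite := by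
  by_contra hinf
  obtain ⟨c, -, hc⟩ := Set.Infinite.exists_accPt_of_subset_isCompact hinf
    hs.isCompact_closure (inter_subset_left.trans subset_closure)
  have hfreq : ∃ᶠ y in 𝓝[≠] c, besselF γ y = 0 :=
    (accPt_iff_frequently_nhdsNE.1 hc).mono fun y hy ↦ hy.2
  have hc0 : besselF γ c = 0 :=
    tendsto_nhds_unique_of_frequently_eq (continuous_besselF hγ).continuousAt tendsto_const_nhds
      (frequently_nhdsWithin_iff.1 hfreq |>.mono fun _ h ↦ h.1)
  exact hfreq ((hasDerivAt_besselF hγ c).eventually_ne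
    (neg_ne_zero.2 (besselF_add_one_ne_zero hγ hc0)))

lemma exists_finset_card_zeros_deriv {f f' : ℝ → ℝ} (hf : ∀ x, HasDerivAt f (f' x) x)
    {a b : ℝ} (s : Finset ℝ) (hs : ↑s ⊆ Icc a b ∩ f ⁻¹' {0}) :
    ∃ t : Finset ℝ, t.card = s.card - 1 ∧ ↑t ⊆ Ioo a b ∩ f' ⁻¹' {0} := by
  classical
  induction s using Finset.induction_on_max generalizing b with
  | empty => exact ⟨∅, rfl, by simp⟩
  | insert M s hlt ih =>
    rw [Finset.coe_insert, insert_subset_iff] at hs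
    rcases s.eq_empty_or_nonempty with rfl | hne
    · exact ⟨∅, rfl, by simp⟩
    set M' := s.max' hne
    have hM' : M' < M := hlt M' (s.max'_mem hne)
    obtain ⟨t, htcard, ht⟩ := ih (b := M') fun y hy ↦
      ⟨⟨(hs.2 hy).1.1, s.le_max' y hy⟩, (hs.2 hy).2⟩
    obtain ⟨c, hc, hc0⟩ := exists_hasDerivAt_eq_zero hM' (HasDerivAt.continuousOn fun x _ ↦ hf x)
      (by rw [((hs.2 (s.max'_mem hne)).2 : f M' = 0), (hs.1.2 : f M = 0)]) fun x _ ↦ hf x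
    have hct : c ∉ t := fun h ↦ (ht h).1.2.not_gt hc.1
    refine ⟨insert c t, ?_, ?_⟩
    · rw [Finset.card_insert_of_notMem hct, htcard,
        Finset.card_insert_of_notMem fun h ↦ (hlt M h).false]
      have := hne.card_pos
      omega
    · rw [Finset.coe_insert, insert_subset_iff]
      refine ⟨⟨⟨(hs.2 (s.max'_mem hne)).1.1.trans_lt hc.1, hc.2.trans_le hs.1.1.2⟩, hc0⟩, ?_⟩
      exact ht.trans (inter_subset_inter_left _ (Ioo_subset_Ioo_right (hM'.le.trans hs.1.1.2)))

lemma hasDerivAt_besselF_add_one (hγ : -1 < γ) (x : ℝ) :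
    HasDerivAt (besselF (γ + 1)) (-besselF (γ + 2) x) x := by
  simpa [add_assoc, one_add_one_eq_two] using hasDerivAt_besselF (γ := γ + 1) (by linarith) x

lemma exists_besselF_add_two_eq_zero_mem_Ioo (hγ : -1 < γ) {c b : ℝ} (hcb : c < b) (hb : 0 < b)
    (hc : besselF (γ + 1) c = 0) (hb0 : besselF γ b = 0) :
    ∃ d ∈ Ioo c b, besselF (γ + 2) d = 0 := by
  obtain ⟨ξ, hξ, hξ'⟩ := exists_hasDerivAt_eq_slope (besselF (γ + 1)) (fun x ↦ -besselF (γ + 2) x)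
    hcb (continuous_besselF (by linarith)).continuousOn fun x _ ↦ hasDerivAt_besselF_add_one hγ x
  have hrec := besselF_add_mul_besselF_add_two hγ b
  rw [hb0, zero_add] at hrec
  rw [hc, sub_zero, eq_div_iff (sub_pos.2 hcb).ne'] at hξ'
  have hb2 : besselF (γ + 2) b ≠ 0 := fun h ↦ besselF_add_one_ne_zero hγ hb0 <| by
    rw [h, mul_zero, eq_comm, mul_eq_zero] at hrec
    exact hrec.resolve_left (by linarith)
  -- `b F_{γ+2}(b) = (γ+1) F_{γ+1}(b) = -(γ+1)(b-c) F_{γ+2}(ξ)`: opposite signs at `ξ` and `b`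
  have hsign : besselF (γ + 2) ξ * besselF (γ + 2) b ≤ 0 := by
    have : b * (besselF (γ + 2) ξ * besselF (γ + 2) b) =
        -((γ + 1) * (b - c) * besselF (γ + 2) ξ ^ 2) := by
      rw [← hξ'] at hrec
      linear_combination besselF (γ + 2) ξ * hrec
    have := mul_nonneg (mul_nonneg (by linarith : (0 : ℝ) ≤ γ + 1) (sub_pos.2 hcb).le)
      (sq_nonneg (besselF (γ + 2) ξ))
    nlinarith
  obtain ⟨d, hd, hd0⟩ := intermediate_value_uIcc (continuous_besselF (by linarith)).continuousOn
    (show (0 : ℝ) ∈ uIcc (besselF (γ + 2) ξ) (besselF (γ + 2) b) by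
      rw [mem_uIcc]
      rcases mul_nonpos_iff.1 hsign with h | h
      exacts [Or.inr ⟨h.2, h.1⟩, Or.inl h])
  rw [uIcc_of_le hξ.2.le] at hd
  exact ⟨d, ⟨hξ.1.trans_le hd.1, hd.2.lt_of_ne (by rintro rfl; exact hb2 hd0)⟩, hd0⟩

lemma exists_finset_card_zeros_besselF_add_two (hγ : -1 < γ) {b : ℝ} (s : Finset ℝ)
    (hs : ↑s ⊆ Ioc 0 b ∩ besselF γ ⁻¹' {0}) :
    ∃ t : Finset ℝ, t.card = s.card - 1 ∧ ↑t ⊆ Ioo 0 b ∩ besselF (γ + 2) ⁻¹' {0} := by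
  classical
  rcases s.eq_empty_or_nonempty with rfl | hs0
  · exact ⟨∅, rfl, by simp⟩
  have hmin := (hs (s.min'_mem hs0)).1
  have hmax := hs (s.max'_mem hs0)
  obtain ⟨u, hucard, hu⟩ := exists_finset_card_zeros_deriv (hasDerivAt_besselF hγ)
    (a := s.min' hs0) (b := s.max' hs0) s fun y hy ↦ ⟨⟨s.min'_le y hy, s.le_max' y hy⟩, (hs hy).2⟩
  rcases u.eq_empty_or_nonempty with rfl | hu0
  · exact ⟨∅, hucard, by simp⟩
  set c := u.max' hu0
  have hc := hu (u.max'_mem hu0)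
  simp only [mem_inter_iff, mem_preimage, mem_singleton_iff, neg_eq_zero] at hc
  obtain ⟨v, hvcard, hv⟩ := exists_finset_card_zeros_deriv (hasDerivAt_besselF_add_one hγ)
    (a := u.min' hu0) (b := c) u fun y hy ↦
      ⟨⟨u.min'_le y hy, u.le_max' y hy⟩, neg_eq_zero.1 (hu hy).2⟩
  obtain ⟨d, hd, hd0⟩ :=
    exists_besselF_add_two_eq_zero_mem_Ioo hγ hc.1.2 hmax.1.1 hc.2 hmax.2
  have hdv : d ∉ v := fun h ↦ (hv h).1.2.not_gt hd.1
  refine ⟨insert d v, ?_, ?_⟩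
  · rw [Finset.card_insert_of_notMem hdv, hvcard, ← hucard]
    have := hu0.card_pos
    omega
  · have hu_min := (hu (u.min'_mem hu0)).1.1
    rw [Finset.coe_insert, insert_subset_iff]
    refine ⟨⟨⟨hmin.1.trans (hc.1.1.trans hd.1), hd.2.trans_le hmax.1.2⟩, hd0⟩, fun y hy ↦ ?_⟩
    have hy := hv hy
    simp only [mem_inter_iff, mem_preimage, mem_singleton_iff, neg_eq_zero] at hy ⊢
    exact ⟨⟨hmin.1.trans (hu_min.trans hy.1.1), hy.1.2.trans (hc.1.2.trans_le hmax.1.2)⟩, hy.2⟩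

lemma exists_finset_card_zeros_besselF_add_two_mul (hγ : -1 < γ) {b : ℝ} (n : ℕ)
    (s : Finset ℝ) (hs : ↑s ⊆ Ioc 0 b ∩ besselF γ ⁻¹' {0}) :
    ∃ t : Finset ℝ, t.card = s.card - (n + 1) ∧
      ↑t ⊆ Ioo 0 b ∩ besselF (γ + 2 * (n + 1)) ⁻¹' {0} := by
  induction n with
  | zero => simpa using exists_finset_card_zeros_besselF_add_two hγ s hs
  | succ n ih =>
    obtain ⟨t, htcard, ht⟩ := ih
    obtain ⟨u, hucard, hu⟩ := exists_finset_card_zeros_besselF_add_two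
      (by linarith [n.cast_nonneg (α := ℝ)]) t
      (ht.trans (inter_subset_inter_left _ Ioo_subset_Ioc_self))
    refine ⟨u, by omega, ?_⟩
    convert hu using 4
    push_cast
    ring

lemma besselJ_eq_rpow_mul_besselF (γ : ℝ) {t : ℝ} (ht : 0 < t) :
    besselJ γ t = (t / 2) ^ γ * besselF γ ((t / 2) ^ 2) := by
  rw [besselJ, besselF, ← tsum_mul_left]
  refine tsum_congr fun k ↦ ?_
  rw [rpow_add (by positivity), show 2 * (k : ℝ) = (2 * k : ℕ) by push_cast; ring, rpow_natCast,
    pow_mul, besselFCoeff]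
  ring

lemma besselJ_eq_zero_iff (γ : ℝ) {t : ℝ} (ht : 0 < t) :
    besselJ γ t = 0 ↔ besselF γ ((t / 2) ^ 2) = 0 := by
  rw [besselJ_eq_rpow_mul_besselF γ ht, mul_eq_zero,
    or_iff_right (rpow_pos_of_pos (by positivity) γ).ne']

lemma injOn_div_two_sq : InjOn (fun t : ℝ ↦ (t / 2) ^ 2) (Ioi 0) := fun s hs t ht h ↦ by
  have := (pow_left_inj₀ (div_pos hs two_pos).le (div_pos ht two_pos).le two_ne_zero).1 h
  linarith

lemma finite_zeros_besselJ (hγ : -1 < γ) (r : ℝ) : {t ∈ Ioo 0 r | besselJ γ t = 0}.Finite := by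
  refine .of_finite_image ((finite_inter_besselF_preimage_zero hγ
    (Metric.isBounded_Icc 0 ((r / 2) ^ 2))).subset ?_) (injOn_div_two_sq.mono fun t ht ↦ ht.1.1)
  rintro _ ⟨t, ⟨ht, hJ⟩, rfl⟩
  exact ⟨⟨by positivity, pow_le_pow_left₀ (by linarith [ht.1]) (by linarith [ht.2]) 2⟩,
    (besselJ_eq_zero_iff γ ht.1).1 hJ⟩

lemma exists_finset_card_zeros_besselJ_add_two_mul (hγ : -1 < γ) {r : ℝ} (n : ℕ)
    (s : Finset ℝ) (hs : ↑s ⊆ Ioc 0 r ∩ besselJ γ ⁻¹' {0}) :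
    ∃ t : Finset ℝ, t.card = s.card - (n + 1) ∧
      ↑t ⊆ Ioo 0 r ∩ besselJ (γ + 2 * (n + 1)) ⁻¹' {0} := by
  classical
  rcases s.eq_empty_or_nonempty with rfl | ⟨r₀, hr₀⟩
  · exact ⟨∅, by simp, by simp⟩
  have hr : 0 < r / 2 := by linarith [(hs hr₀).1.1, (hs hr₀).1.2]
  obtain ⟨u, hucard, hu⟩ := exists_finset_card_zeros_besselF_add_two_mul hγ (b := (r / 2) ^ 2) n
    (s.image fun t ↦ (t / 2) ^ 2) <| by
      simp only [Finset.coe_image, image_subset_iff]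
      intro t ht
      have ⟨⟨ht0, htr⟩, hJ⟩ := hs ht
      exact ⟨⟨by positivity, pow_le_pow_left₀ (by linarith) (by linarith) 2⟩,
        (besselJ_eq_zero_iff γ ht0).1 hJ⟩
  have hsqrt : InjOn (fun x : ℝ ↦ 2 * √x) u := fun x hx y hy h ↦ by
    simpa [sqrt_inj (hu hx).1.1.le (hu hy).1.1.le] using h
  refine ⟨u.image fun x ↦ 2 * √x, ?_, ?_⟩
  · rw [Finset.card_image_of_injOn hsqrt, hucard,
      Finset.card_image_of_injOn (injOn_div_two_sq.mono fun t ht ↦ (hs ht).1.1)]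
  · simp only [Finset.coe_image, image_subset_iff]
    intro x hx
    have ⟨⟨hx0, hxr⟩, hF⟩ := hu hx
    have hsq : (2 * √x / 2) ^ 2 = x := by rw [mul_div_cancel_left₀ _ two_ne_zero, sq_sqrt hx0.le]
    refine ⟨⟨by positivity, ?_⟩, (besselJ_eq_zero_iff _ (by positivity)).2 (by rw [hsq]; exact hF)⟩
    linarith [(sqrt_lt' hr).2 hxr]

end

/-- If `z` is the `m`-th positive zero of `𝒥_β` and `z'` is the `i`-th positive zero of
`𝒥_{β+2(m−i)}`, with `1 ≤ i < m` and `β > 0`, then `z' < z`. -/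
theorem bessel_zero_estimate (β : ℝ) (hβ : 0 < β) (i m : ℕ) (hi : 1 ≤ i) (him : i < m)
    (z z' : ℝ) (hz : IsNthPosZero β m z)
    (hz' : IsNthPosZero (β + 2 * ((m : ℝ) - (i : ℝ))) i z') :
    z' < z := by
  classical
  obtain ⟨hz0, hzJ, hzcard⟩ := hz
  by_contra! hzz'
  obtain ⟨n, hn⟩ : ∃ n, m = i + (n + 1) := ⟨m - i - 1, by omega⟩
  have hcast : β + 2 * ((m : ℝ) - i) = β + 2 * ((n : ℝ) + 1) := by rw [hn]; push_cast; ring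
  rw [hcast] at hz'
  have hS := finite_zeros_besselJ (γ := β) (by linarith) z
  obtain ⟨t, htcard, ht⟩ := exists_finset_card_zeros_besselJ_add_two_mul (γ := β) (r := z)
    (by linarith) n (insert z hS.toFinset) <| by
      rw [Finset.coe_insert, Finite.coe_toFinset, insert_subset_iff]
      exact ⟨⟨⟨hz0, le_rfl⟩, hzJ⟩, fun t ht ↦ ⟨Ioo_subset_Ioc_self ht.1, ht.2⟩⟩
  have : t.card ≤ i - 1 := by
    rw [← hz'.2.2, ← ncard_coe_finset]
    exact ncard_le_ncard (fun y hy ↦ ⟨⟨(ht hy).1.1, (ht hy).1.2.trans_le hzz'⟩, (ht hy).2⟩)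
      (finite_zeros_besselJ (by linarith [n.cast_nonneg (α := ℝ)]) z')
  rw [htcard, Finset.card_insert_of_notMem (by simp), ← ncard_eq_toFinset_card _ hS,
    hzcard] at this
  omega
end

section
/- Let N ≥ 2 and m ≥ 2 be integers and let α ≥ 0 be a real number. Then Σ_{k=1}^{m−1} (m−k) · Σ_{j=⌊(2+α)(k−1)⌋+1}^{⌊(2+α)k⌋} N_j ≥ Σ_{k=1}^{m−1} (m−k) · Σ_{j=(2+⌊α⌋)(k−1)+1}^{(2+⌊α⌋)k} N_j, where ⌊·⌋ denotes the floor function. -/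
/-- The multiplicity `N_j` of the eigenvalue `j(N+j−2)` of the Laplace–Beltrami operator
on the sphere `S^{N−1}`: `N_0 = 1` and `N_j = (N+2j−2)·(N+j−3)!/((N−2)!·j!)` for `j ≥ 1`. -/
def multSph (N j : ℕ) : ℕ :=
  if j = 0 then 1
  else (N + 2 * j - 2) * Nat.factorial (N + j - 3) / (Nat.factorial (N - 2) * Nat.factorial j)

/-! Both sides have the form `Σ_{k=1}^{m−1} (m−k) · Σ_{j ∈ (b(k−1), b(k)]} N_j` for a monotone `b` with
`b 0 = 0`. Swapping the order of summation turns this into `Σ_{i=1}^{m−1} Σ_{j ∈ (0, b(i)]} N_j`, and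
`(2+⌊α⌋)·i ≤ ⌊(2+α)·i⌋` makes each inner range on the right a subrange of the one on the left. -/

open Finset

section

variable {M : Type*} [AddCommMonoid M]

theorem sum_Icc_sub_smul_eq_sum_sum_Icc (g : ℕ → M) (m : ℕ) :
    ∑ k ∈ Icc 1 (m - 1), (m - k) • g k = ∑ i ∈ Icc 1 (m - 1), ∑ k ∈ Icc 1 i, g k := by
  rw [sum_comm' (t' := Icc 1 (m - 1)) (s' := fun k => Icc k (m - 1))
    (fun i k => by simp only [mem_Icc]; omega)]
  refine sum_congr rfl fun k hk => ?_
  rw [sum_const, Nat.card_Icc]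
  congr 1
  simp only [mem_Icc] at hk
  omega

theorem sum_Icc_sum_Ioc_consecutive (f : ℕ → M) {b : ℕ → ℕ} (hb : Monotone b) (i : ℕ) :
    ∑ k ∈ Icc 1 i, ∑ j ∈ Ioc (b (k - 1)) (b k), f j = ∑ j ∈ Ioc (b 0) (b i), f j := by
  induction i with
  | zero => simp
  | succ n ih =>
    rw [sum_Icc_succ_top (by omega), ih, Nat.add_sub_cancel,
      sum_Ioc_consecutive f (hb n.zero_le) (hb n.le_succ)]

theorem sum_Icc_sub_smul_sum_Ioc_consecutive (f : ℕ → M) {b : ℕ → ℕ} (hb : Monotone b)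
    (m : ℕ) :
    ∑ k ∈ Icc 1 (m - 1), (m - k) • ∑ j ∈ Ioc (b (k - 1)) (b k), f j
      = ∑ i ∈ Icc 1 (m - 1), ∑ j ∈ Ioc (b 0) (b i), f j := by
  rw [sum_Icc_sub_smul_eq_sum_sum_Icc]
  exact sum_congr rfl fun i _ => sum_Icc_sum_Ioc_consecutive f hb i

end

theorem sum_Icc_sub_smul_sum_Ioc_consecutive_mono {M : Type*} [AddCommMonoid M] [PartialOrder M]
    [CanonicallyOrderedAdd M] (f : ℕ → M) {b c : ℕ → ℕ} (hb : Monotone b) (hc : Monotone c)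
    (hcb : c ≤ b) (h0 : b 0 ≤ c 0) (m : ℕ) :
    ∑ k ∈ Icc 1 (m - 1), (m - k) • ∑ j ∈ Ioc (c (k - 1)) (c k), f j
      ≤ ∑ k ∈ Icc 1 (m - 1), (m - k) • ∑ j ∈ Ioc (b (k - 1)) (b k), f j := by
  rw [sum_Icc_sub_smul_sum_Ioc_consecutive f hb, sum_Icc_sub_smul_sum_Ioc_consecutive f hc]
  exact sum_le_sum fun i _ => sum_le_sum_of_subset (Ioc_subset_Ioc h0 (hcb i))

theorem morse_index_sum_lower_bound_general (N m : ℕ) (α : ℝ) (hα : 0 ≤ α) :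
    ∑ k ∈ Finset.Icc 1 (m - 1),
        (m - k) * ∑ j ∈ Finset.Icc (⌊(2 + α) * ((k : ℝ) - 1)⌋₊ + 1)
          ⌊(2 + α) * (k : ℝ)⌋₊, multSph N j
      ≥ ∑ k ∈ Finset.Icc 1 (m - 1),
          (m - k) * ∑ j ∈ Finset.Icc ((2 + ⌊α⌋₊) * (k - 1) + 1)
            ((2 + ⌊α⌋₊) * k), multSph N j := by
  set b : ℕ → ℕ := fun n => ⌊(2 + α) * (n : ℝ)⌋₊
  set c : ℕ → ℕ := fun n => (2 + ⌊α⌋₊) * n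
  have hb : Monotone b := fun x y hxy => Nat.floor_le_floor (by gcongr)
  have hc : Monotone c := fun x y hxy => Nat.mul_le_mul_left _ hxy
  have hcb : c ≤ b := fun n => Nat.le_floor (by
    push_cast [c]
    gcongr
    linarith [Nat.floor_le hα])
  have hfloor_pred : ∀ k ∈ Icc 1 (m - 1), ⌊(2 + α) * ((k : ℝ) - 1)⌋₊ = b (k - 1) := by
    intro k hk
    simp only [b, Nat.cast_sub (mem_Icc.mp hk).1, Nat.cast_one]
  rw [ge_iff_le]
  conv_rhs => rw [sum_congr rfl fun k hk => by rw [hfloor_pred k hk]]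
  simp only [Icc_add_one_left_eq_Ioc, ← smul_eq_mul]
  exact sum_Icc_sub_smul_sum_Ioc_consecutive_mono _ hb hc hcb (by simp [b, c]) m

/-- For `N ≥ 2`, `m ≥ 2` and `α ≥ 0`:
`Σ_{k=1}^{m−1} (m−k) · Σ_{j=⌊(2+α)(k−1)⌋+1}^{⌊(2+α)k⌋} N_j
  ≥ Σ_{k=1}^{m−1} (m−k) · Σ_{j=(2+⌊α⌋)(k−1)+1}^{(2+⌊α⌋)k} N_j`. -/
theorem morse_index_sum_lower_bound (N m : ℕ) (hN : 2 ≤ N) (hm : 2 ≤ m) (α : ℝ) (hα : 0 ≤ α) :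
    ∑ k ∈ Finset.Icc 1 (m - 1),
        (m - k) * ∑ j ∈ Finset.Icc (⌊(2 + α) * ((k : ℝ) - 1)⌋₊ + 1)
          ⌊(2 + α) * (k : ℝ)⌋₊, multSph N j
      ≥ ∑ k ∈ Finset.Icc 1 (m - 1),
          (m - k) * ∑ j ∈ Finset.Icc ((2 + ⌊α⌋₊) * (k - 1) + 1)
            ((2 + ⌊α⌋₊) * k), multSph N j :=
  morse_index_sum_lower_bound_general N m α hα
end

section
/- Let N ≥ 3 and m ≥ 2 be integers and let α ≥ 0 be a real number. Then Σ_{i=1}^{m−1} (m−i) · Σ_{j=(2+⌊α⌋)(i−1)+1}^{(2+⌊α⌋)i} N_j > m · Σ_{j=1}^{1+⌊α/2⌋} N_j, where ⌊·⌋ denotes the floor function. -/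
open Finset Nat

theorem multSph_add_three (n j : ℕ) :
    multSph (n + 3) j = (j + n + 1).choose (n + 1) + (j + n).choose (n + 1) := by
  rcases j with _ | k
  · simp [multSph]
  have h₁ := add_choose_mul_factorial_mul_factorial (k + 1) (n + 1)
  have h₂ := add_choose_mul_factorial_mul_factorial k (n + 1)
  rw [show k + 1 + (n + 1) = k + 1 + n + 1 by omega, factorial_succ (k + 1 + n)] at h₁
  rw [show k + (n + 1) = k + 1 + n by omega] at h₂
  have hmul : ((k + 1 + n + 1).choose (n + 1) + (k + 1 + n).choose (n + 1)) *
      ((n + 1)! * (k + 1)!) = (n + 2 * (k + 1) + 1) * (k + 1 + n)! := by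
    rw [factorial_succ k] at h₁ ⊢; linear_combination h₁ + (k + 1) * h₂
  simp only [multSph, add_one_ne_zero, if_false]
  rw [show n + 3 + 2 * (k + 1) - 2 = n + 2 * (k + 1) + 1 by omega,
    show n + 3 + (k + 1) - 3 = k + 1 + n by omega, show n + 3 - 2 = n + 1 by omega, ← hmul,
    Nat.mul_div_cancel _ (by positivity)]

theorem multSph_strictMono {N : ℕ} (hN : 3 ≤ N) : StrictMono (multSph N) := by
  obtain ⟨n, rfl⟩ := Nat.exists_eq_add_of_le' hN
  refine strictMono_nat_of_lt_succ fun j => ?_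
  rw [multSph_add_three, multSph_add_three, show j + 1 + n = j + n + 1 by omega,
    choose_succ_succ' (j + n + 1) n]
  have := choose_pos (show n ≤ j + n + 1 by omega)
  have : (j + n).choose (n + 1) ≤ (j + n + 1).choose (n + 1) := choose_le_succ _ _
  omega

section Blocks

variable {M : Type*} [AddCommMonoid M] [PartialOrder M] {f : ℕ → M}

theorem sum_Icc_le_sum_Icc_add_of_monotone [IsOrderedAddMonoid M] (hf : Monotone f) (s L : ℕ) :
    ∑ j ∈ Icc 1 L, f j ≤ ∑ j ∈ Icc (s + 1) (s + L), f j := by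
  rw [← map_add_left_Icc, sum_map]
  exact sum_le_sum fun j _ => hf (Nat.le_add_left j s)

theorem sum_Icc_le_sum_Icc_block_of_monotone [IsOrderedAddMonoid M] (hf : Monotone f) (L : ℕ)
    {i : ℕ} (hi : 1 ≤ i) :
    ∑ j ∈ Icc 1 L, f j ≤ ∑ j ∈ Icc (L * (i - 1) + 1) (L * i), f j := by
  obtain ⟨k, rfl⟩ := Nat.exists_eq_add_of_le' hi
  rw [Nat.add_sub_cancel, Nat.mul_succ]
  exact sum_Icc_le_sum_Icc_add_of_monotone hf _ L

theorem two_nsmul_sum_Icc_lt_of_strictMono [IsOrderedCancelAddMonoid M] (hf : StrictMono f)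
    {K : ℕ} (hK : 0 < K) :
    2 • ∑ j ∈ Icc 1 K, f j < ∑ j ∈ Icc 1 (2 * K), f j := by
  have hsplit : ∑ j ∈ Icc 1 (2 * K), f j =
      ∑ j ∈ Icc 1 K, f j + ∑ j ∈ Icc (K + 1) (2 * K), f j := by
    have h := sum_Ioc_consecutive f (Nat.zero_le K) (Nat.le_add_right K K)
    rw [two_mul]
    rwa [← Icc_add_one_left_eq_Ioc, ← Icc_add_one_left_eq_Ioc, ← Icc_add_one_left_eq_Ioc,
      zero_add, eq_comm] at h
  have hshift : ∑ j ∈ Icc 1 K, f j < ∑ j ∈ Icc (K + 1) (2 * K), f j := by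
    rw [two_mul, ← map_add_left_Icc, sum_map]
    exact sum_lt_sum_of_nonempty (nonempty_Icc.2 hK) fun j _ => hf (lt_add_of_pos_left j hK)
  rw [hsplit, two_nsmul]
  exact add_lt_add_of_le_of_lt le_rfl hshift

end Blocks

theorem sub_one_mul_sum_Icc_le_sum_Icc_blocks {f : ℕ → ℕ} (hf : Monotone f) (m L : ℕ) :
    (m - 1) * ∑ j ∈ Icc 1 L, f j ≤
      ∑ i ∈ Icc 1 (m - 1), (m - i) * ∑ j ∈ Icc (L * (i - 1) + 1) (L * i), f j := by
  calc (m - 1) * ∑ j ∈ Icc 1 L, f j = ∑ i ∈ Icc 1 (m - 1), ∑ j ∈ Icc 1 L, f j := by simp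
    _ ≤ _ := sum_le_sum fun i hi => ?_
  rw [mem_Icc] at hi
  calc ∑ j ∈ Icc 1 L, f j ≤ ∑ j ∈ Icc (L * (i - 1) + 1) (L * i), f j :=
        sum_Icc_le_sum_Icc_block_of_monotone hf L hi.1
    _ ≤ (m - i) * ∑ j ∈ Icc (L * (i - 1) + 1) (L * i), f j :=
        Nat.le_mul_of_pos_left _ (by omega)

theorem morse_index_comparison_general (N m : ℕ) (hN : 3 ≤ N) (hm : 2 ≤ m) (α : ℝ) :
    ∑ i ∈ Finset.Icc 1 (m - 1),
        (m - i) * ∑ j ∈ Finset.Icc ((2 + ⌊α⌋₊) * (i - 1) + 1) ((2 + ⌊α⌋₊) * i), multSph N j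
      > m * ∑ j ∈ Finset.Icc 1 (1 + ⌊α / 2⌋₊), multSph N j := by
  have hf := multSph_strictMono hN
  set L := 2 + ⌊α⌋₊
  set K := 1 + ⌊α / 2⌋₊
  have hKL : 2 * K ≤ L := by simp only [K, L, Nat.floor_div_ofNat]; omega
  have hhalf : 2 * ∑ j ∈ Icc 1 K, multSph N j < ∑ j ∈ Icc 1 L, multSph N j := by
    rw [← smul_eq_mul]
    exact (two_nsmul_sum_Icc_lt_of_strictMono hf (by omega)).trans_le
      (sum_le_sum_of_subset (Icc_subset_Icc_right hKL))
  calc m * ∑ j ∈ Icc 1 K, multSph N j ≤ (m - 1) * (2 * ∑ j ∈ Icc 1 K, multSph N j) := by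
        rw [← mul_assoc]; exact Nat.mul_le_mul_right _ (by omega)
    _ < (m - 1) * ∑ j ∈ Icc 1 L, multSph N j := Nat.mul_lt_mul_of_pos_left hhalf (by omega)
    _ ≤ _ := sub_one_mul_sum_Icc_le_sum_Icc_blocks hf.monotone m L

/-- For `N ≥ 3`, `m ≥ 2` and `α ≥ 0`:
`Σ_{i=1}^{m−1} (m−i) · Σ_{j=(2+⌊α⌋)(i−1)+1}^{(2+⌊α⌋)i} N_j > m · Σ_{j=1}^{1+⌊α/2⌋} N_j`. -/
theorem morse_index_comparison (N m : ℕ) (hN : 3 ≤ N) (hm : 2 ≤ m) (α : ℝ) (hα : 0 ≤ α) :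
    ∑ i ∈ Finset.Icc 1 (m - 1),
        (m - i) * ∑ j ∈ Finset.Icc ((2 + ⌊α⌋₊) * (i - 1) + 1) ((2 + ⌊α⌋₊) * i), multSph N j
      > m * ∑ j ∈ Finset.Icc 1 (1 + ⌊α / 2⌋₊), multSph N j :=
  morse_index_comparison_general N m hN hm α
end

section
/- Let N ≥ 2 be an integer, α > 0 a real number, and n ≥ 1 an integer. Then (2/(2+α))²·n(N−2+n) < (2N−2+α)/(2+α) if and only if n ≤ ⌈α/2⌉, where ⌈·⌉ denotes the ceiling function. -/
/-! Put `β = 2 + α`. Clearing the denominator `β²` turns the inequality into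
`(2n)² + (2N - 4)·2n < β² + (2N - 4)·β`, i.e. `(2n - β)(2n + β + 2N - 4) < 0`.
The second factor is positive, so the inequality says `2n < 2 + α`, that is `n - 1 < α/2`,
which for an integer `n` means `n ≤ ⌈α/2⌉`. -/

theorem sq_add_mul_lt_sq_add_mul_iff {a b c : ℝ} (h : 0 < a + b + c) :
    a ^ 2 + c * a < b ^ 2 + c * b ↔ a < b := by
  have factor : b ^ 2 + c * b - (a ^ 2 + c * a) = (b - a) * (a + b + c) := by ring
  rw [← sub_pos, factor, mul_pos_iff_of_pos_right h, sub_pos]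

theorem threshold_lt_iff {d α x : ℝ} (hβ : 0 < 2 + α) :
    (2 / (2 + α)) ^ 2 * (x * (d - 2 + x)) < (2 * d - 2 + α) / (2 + α) ↔
      (2 * x) ^ 2 + (2 * d - 4) * (2 * x) < (2 + α) ^ 2 + (2 * d - 4) * (2 + α) := by
  have lhs : (2 / (2 + α)) ^ 2 * (x * (d - 2 + x))
      = ((2 * x) ^ 2 + (2 * d - 4) * (2 * x)) / (2 + α) ^ 2 := by
    field_simp; ring
  have rhs : (2 * d - 2 + α) / (2 + α)
      = ((2 + α) ^ 2 + (2 * d - 4) * (2 + α)) / (2 + α) ^ 2 := by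
    field_simp; ring
  rw [lhs, rhs, div_lt_div_iff_of_pos_right (by positivity)]

theorem eigenvalue_below_threshold_general (N : ℕ) (hN : 2 ≤ N) (α : ℝ) (hα : 0 < α)
    (n : ℕ) :
    (2 / (2 + α)) ^ 2 * ((n : ℝ) * ((N : ℝ) - 2 + (n : ℝ))) < (2 * (N : ℝ) - 2 + α) / (2 + α)
      ↔ (n : ℤ) ≤ ⌈α / 2⌉ := by
  have hN' : (2 : ℝ) ≤ N := by exact_mod_cast hN
  have hn : (0 : ℝ) ≤ n := n.cast_nonneg
  rw [threshold_lt_iff (by linarith), sq_add_mul_lt_sq_add_mul_iff (by linarith),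
    Int.le_ceil_iff]
  push_cast
  constructor <;> intro h <;> linarith

/-- For `N ≥ 2`, `α > 0` and an integer `n ≥ 1`:
`(2/(2+α))²·n(N−2+n) < (2N−2+α)/(2+α)` if and only if `n ≤ ⌈α/2⌉`. -/
theorem eigenvalue_below_threshold (N : ℕ) (hN : 2 ≤ N) (α : ℝ) (hα : 0 < α)
    (n : ℕ) (hn : 1 ≤ n) :
    (2 / (2 + α)) ^ 2 * ((n : ℝ) * ((N : ℝ) - 2 + (n : ℝ))) < (2 * (N : ℝ) - 2 + α) / (2 + α)
      ↔ (n : ℤ) ≤ ⌈α / 2⌉ :=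
  eigenvalue_below_threshold_general N hN α hα n
end

section
/- Let N ≥ 2 be an integer and α ≥ 0, p > 1 be real numbers, and set M = 2(N+α)/(2+α). Suppose u : (0,1) → ℝ is twice differentiable and satisfies u''(r) + ((N−1)/r)·u'(r) + r^α·|u(r)|^{p−1}u(r) = 0 for every r ∈ (0,1). Define w : (0,1) → ℝ by w(t) = u(t^{2/(2+α)}). Then w is twice differentiable on (0,1), the function t ↦ t^{M−1}w'(t) is differentiable on (0,1), and (t^{M−1}w'(t))' = −(2/(2+α))²·t^{M−1}·|w(t)|^{p−1}w(t) for every t ∈ (0,1). -/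
/-!
Put `B = 2/(2+α)`, so that `B(N+α) = M`. Written in divergence form the radial equation reads
`(r^{N-1} u')' = -r^{N-1+α} |u|^{p-1} u`. Since `w'(t) = B t^{B-1} u'(t^B)` and
`(M-1) + (B-1) = B(N-1)`, the weighted derivative is the radial flux in the new variable,
`t^{M-1} w'(t) = B (t^B)^{N-1} u'(t^B)`. Differentiating by the chain rule produces the factor
`B² (t^B)^{N-1+α} t^{B-1} = B² t^{M-1}`.
-/

open Set

lemma rpow_mem_Ioo_zero_one {t B : ℝ} (ht : t ∈ Ioo (0 : ℝ) 1) (hB : 0 < B) :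
    t ^ B ∈ Ioo (0 : ℝ) 1 :=
  ⟨Real.rpow_pos_of_pos ht.1 B, Real.rpow_lt_one ht.1.le ht.2 hB⟩

lemma HasDerivAt.comp_rpow_const {f : ℝ → ℝ} {f' t : ℝ} (B : ℝ) (ht : 0 < t)
    (hf : HasDerivAt f f' (t ^ B)) :
    HasDerivAt (fun s => f (s ^ B)) (f' * (B * t ^ (B - 1))) t :=
  hf.comp t (Real.hasDerivAt_rpow_const (Or.inl ht.ne'))

lemma hasDerivAt_rpow_mul_of_radial_eq {v g : ℝ → ℝ} {v' k r : ℝ} (hr : 0 < r)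
    (hv : HasDerivAt v v' r) (heq : v' + k / r * v r + g r = 0) :
    HasDerivAt (fun s => s ^ k * v s) (-(r ^ k * g r)) r := by
  refine ((Real.hasDerivAt_rpow_const (Or.inl hr.ne')).mul hv).congr_deriv ?_
  rw [Real.rpow_sub_one hr.ne']
  linear_combination r ^ k * heq

theorem henon_radial_transformation_general (N : ℕ) (α p M : ℝ) (hα : 0 ≤ α)
    (hM : M = 2 * ((N : ℝ) + α) / (2 + α))
    (u u' u'' : ℝ → ℝ)
    (hu1 : ∀ r ∈ Set.Ioo (0 : ℝ) 1, HasDerivAt u (u' r) r)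
    (hu2 : ∀ r ∈ Set.Ioo (0 : ℝ) 1, HasDerivAt u' (u'' r) r)
    (heq : ∀ r ∈ Set.Ioo (0 : ℝ) 1,
      u'' r + (((N : ℝ) - 1) / r) * u' r + r ^ α * |u r| ^ (p - 1) * u r = 0)
    (w : ℝ → ℝ) (hw : w = fun t => u (t ^ ((2 : ℝ) / (2 + α)))) :
    ∃ w' w'' : ℝ → ℝ,
      (∀ t ∈ Set.Ioo (0 : ℝ) 1, HasDerivAt w (w' t) t) ∧
      (∀ t ∈ Set.Ioo (0 : ℝ) 1, HasDerivAt w' (w'' t) t) ∧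
      (∀ t ∈ Set.Ioo (0 : ℝ) 1, HasDerivAt (fun s => s ^ (M - 1) * w' s)
        (-(2 / (2 + α)) ^ 2 * t ^ (M - 1) * |w t| ^ (p - 1) * w t) t) := by
  set B : ℝ := 2 / (2 + α) with hB_def
  have hB : 0 < B := by positivity
  have hBα : B * α = 2 - 2 * B := by rw [hB_def]; field_simp; ring
  have hMB : M - 1 + (B - 1) = B * ((N : ℝ) - 1) := by
    rw [hM, hB_def]; field_simp; ring
  let w' : ℝ → ℝ := fun t => u' (t ^ B) * (B * t ^ (B - 1))
  refine ⟨w', deriv w', fun t ht => hw ▸ (hu1 _ (rpow_mem_Ioo_zero_one ht hB)).comp_rpow_const B ht.1,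
    fun t ht => ?_, fun t ht => ?_⟩
  · have hu'B := (hu2 _ (rpow_mem_Ioo_zero_one ht hB)).comp_rpow_const B ht.1
    exact (hu'B.differentiableAt.mul
      ((Real.hasDerivAt_rpow_const (Or.inl ht.1.ne')).const_mul B).differentiableAt).hasDerivAt
  have hr := rpow_mem_Ioo_zero_one ht hB
  have hflux := ((hasDerivAt_rpow_mul_of_radial_eq (g := fun r => r ^ α * |u r| ^ (p - 1) * u r)
    hr.1 (hu2 _ hr) (heq _ hr)).comp_rpow_const B ht.1).const_mul B
  refine (hflux.congr_of_eventuallyEq ?_).congr_deriv ?_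
  · filter_upwards [Ioi_mem_nhds ht.1] with s hs
    rw [← Real.rpow_mul hs.le, ← hMB, Real.rpow_add hs]
    ring
  · have ht_pow : t ^ (M - 1) = (t ^ B) ^ ((N : ℝ) - 1) * (t ^ B) ^ α * t ^ (B - 1) := by
      rw [← Real.rpow_mul ht.1.le, ← Real.rpow_mul ht.1.le, ← Real.rpow_add ht.1,
        ← Real.rpow_add ht.1]
      congr 1
      linarith
    rw [hw, ht_pow]
    ring

/-- Let `N ≥ 2`, `α ≥ 0`, `p > 1` and `M = 2(N+α)/(2+α)`. If `u` solves the radial Hénon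
equation `u'' + ((N−1)/r)u' + r^α|u|^{p−1}u = 0` on `(0,1)`, then `w(t) = u(t^{2/(2+α)})`
is twice differentiable on `(0,1)`, `t ↦ t^{M−1}w'(t)` is differentiable on `(0,1)`, and
`(t^{M−1}w'(t))' = −(2/(2+α))²·t^{M−1}·|w(t)|^{p−1}w(t)` on `(0,1)`. -/
theorem henon_radial_transformation (N : ℕ) (hN : 2 ≤ N) (α p M : ℝ) (hα : 0 ≤ α)
    (hp : 1 < p) (hM : M = 2 * ((N : ℝ) + α) / (2 + α))
    (u u' u'' : ℝ → ℝ)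
    (hu1 : ∀ r ∈ Set.Ioo (0 : ℝ) 1, HasDerivAt u (u' r) r)
    (hu2 : ∀ r ∈ Set.Ioo (0 : ℝ) 1, HasDerivAt u' (u'' r) r)
    (heq : ∀ r ∈ Set.Ioo (0 : ℝ) 1,
      u'' r + (((N : ℝ) - 1) / r) * u' r + r ^ α * |u r| ^ (p - 1) * u r = 0)
    (w : ℝ → ℝ) (hw : w = fun t => u (t ^ ((2 : ℝ) / (2 + α)))) :
    ∃ w' w'' : ℝ → ℝ,
      (∀ t ∈ Set.Ioo (0 : ℝ) 1, HasDerivAt w (w' t) t) ∧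
      (∀ t ∈ Set.Ioo (0 : ℝ) 1, HasDerivAt w' (w'' t) t) ∧
      (∀ t ∈ Set.Ioo (0 : ℝ) 1, HasDerivAt (fun s => s ^ (M - 1) * w' s)
        (-(2 / (2 + α)) ^ 2 * t ^ (M - 1) * |w t| ^ (p - 1) * w t) t) :=
  henon_radial_transformation_general N α p M hα hM u u' u'' hu1 hu2 heq w hw
end
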